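/- arXiv:1510.03491 — 3 statements merged into one kernel-verified Lean document; each statement's English description precedes it below -/
import Mathlib

section
/- If ψ ∈ H¹(ℝ) satisfies ‖ψ‖²_{L²} < 2, then the energy E(ψ) = (1/2)‖ψ'‖²_{L²} - (1/4)|ψ(0)|⁴ is nonnegative and moreover ‖ψ'‖²_{L²} ≤ 2E(ψ)/(1 - ‖ψ‖²_{L²}/2). -/
open MeasureTheory

def IsH1 (f f' : ℝ → ℂ) : Prop :=
  Continuous f ∧ AEStronglyMeasurable f' volume ∧
  (∀ x : ℝ, f x = f 0 + ∫ t in (0:ℝ)..x, f' t) ∧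
  Integrable (fun x => ‖f x‖ ^ 2) ∧ Integrable (fun x => ‖f' x‖ ^ 2)

/-! Because `‖ψ‖²` is absolutely continuous with derivative `2⟪ψ, ψ'⟫` almost everywhere, its
variation over any interval is at most `2 ∫ ‖ψ‖‖ψ'‖` there. Comparing `ψ x` with points on either
side of `x` where `‖ψ‖` is arbitrarily small (they exist since `‖ψ‖²` is integrable) gives
`‖ψ x‖² ≤ ∫ ‖ψ‖‖ψ'‖`, and Cauchy–Schwarz turns this into `‖ψ 0‖⁴ ≤ ‖ψ‖²_{L²} ‖ψ'‖²_{L²}`.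
With `M = ‖ψ‖²_{L²} < 2` this gives `2 E(ψ) ≥ (1 - M/2) ‖ψ'‖²_{L²} ≥ 0`. -/

open Set

section

variable {α E : Type*} [MeasurableSpace α] {μ : Measure α} [NormedAddCommGroup E]

lemma MeasureTheory.MemLp.integrable_norm_mul_norm {f g : α → E} (hf : MemLp f 2 μ)
    (hg : MemLp g 2 μ) : Integrable (fun x => ‖f x‖ * ‖g x‖) μ :=
  hf.norm.integrable_mul hg.norm

lemma sq_integral_norm_mul_norm_le {f g : α → E} (hf : MemLp f 2 μ) (hg : MemLp g 2 μ) :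
    (∫ x, ‖f x‖ * ‖g x‖ ∂μ) ^ 2 ≤ (∫ x, ‖f x‖ ^ 2 ∂μ) * ∫ x, ‖g x‖ ^ 2 ∂μ := by
  have holder := integral_mul_norm_le_Lp_mul_Lq Real.HolderConjugate.two_two
    (by simpa using hf) (by simpa using hg)
  simp only [Real.rpow_two, ← Real.sqrt_eq_rpow] at holder
  calc (∫ x, ‖f x‖ * ‖g x‖ ∂μ) ^ 2 ≤ (√(∫ x, ‖f x‖ ^ 2 ∂μ) * √(∫ x, ‖g x‖ ^ 2 ∂μ)) ^ 2 := by
        gcongr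
    _ = _ := by
        rw [mul_pow, Real.sq_sqrt (integral_nonneg fun x => by positivity),
          Real.sq_sqrt (integral_nonneg fun x => by positivity)]

lemma MeasureTheory.Integrable.exists_mem_norm_lt {f : α → E} (hf : Integrable f μ) {s : Set α}
    (hs : μ s = ⊤) {ε : ℝ} (hε : 0 < ε) : ∃ x ∈ s, ‖f x‖ < ε := by
  by_contra! h
  have := (measure_mono (μ := μ) h).trans_lt (hf.measure_norm_ge_lt_top hε)
  simp [hs] at this

end

lemma MeasureTheory.LocallyIntegrable.intervalIntegrable {E : Type*} [NormedAddCommGroup E]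
    {f : ℝ → E} (hf : LocallyIntegrable f volume) (a b : ℝ) : IntervalIntegrable f volume a b :=
  (hf.integrableOn_isCompact isCompact_uIcc).intervalIntegrable

namespace IsH1

variable {ψ ψ' : ℝ → ℂ}

lemma memLp_two (hψ : IsH1 ψ ψ') : MemLp ψ 2 volume :=
  (memLp_two_iff_integrable_sq_norm hψ.1.aestronglyMeasurable).2 hψ.2.2.2.1

lemma memLp_two_deriv (hψ : IsH1 ψ ψ') : MemLp ψ' 2 volume :=
  (memLp_two_iff_integrable_sq_norm hψ.2.1).2 hψ.2.2.2.2

lemma locallyIntegrable_deriv (hψ : IsH1 ψ ψ') : LocallyIntegrable ψ' volume :=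
  hψ.memLp_two_deriv.locallyIntegrable one_le_two

lemma eq_add_integral (hψ : IsH1 ψ ψ') (a x : ℝ) : ψ x = ψ a + ∫ t in a..x, ψ' t := by
  have hii := hψ.locallyIntegrable_deriv.intervalIntegrable
  rw [hψ.2.2.1 x, hψ.2.2.1 a, ← intervalIntegral.integral_interval_sub_left (hii 0 x) (hii 0 a)]
  ring

lemma ae_hasDerivAt (hψ : IsH1 ψ ψ') : ∀ᵐ x, HasDerivAt ψ (ψ' x) x := by
  filter_upwards [LocallyIntegrable.ae_hasDerivAt_integral hψ.locallyIntegrable_deriv] with x hx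
  rw [funext (hψ.eq_add_integral 0)]
  exact (hx 0).const_add _

lemma absolutelyContinuousOnInterval_comp (hψ : IsH1 ψ ψ') (L : ℂ →L[ℝ] ℝ) (a b : ℝ) :
    AbsolutelyContinuousOnInterval (fun x => L (ψ x)) a b := by
  have hii := ((hψ.memLp_two_deriv.continuousLinearMap_comp L).locallyIntegrable
    one_le_two).intervalIntegrable
  have hL : (fun x => L (ψ x)) = fun x => L (ψ a) + ∫ t in a..x, L (ψ' t) := by
    funext x
    rw [hψ.eq_add_integral a x, map_add,
      L.intervalIntegral_comp_comm (hψ.locallyIntegrable_deriv.intervalIntegrable a x)]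
  rw [hL]
  exact (LipschitzWith.const _).lipschitzOnWith.absolutelyContinuousOnInterval.fun_add
    ((hii a b).absolutelyContinuousOnInterval_intervalIntegral left_mem_uIcc)

lemma absolutelyContinuousOnInterval_norm_sq (hψ : IsH1 ψ ψ') (a b : ℝ) :
    AbsolutelyContinuousOnInterval (fun x => ‖ψ x‖ ^ 2) a b := by
  have hre := hψ.absolutelyContinuousOnInterval_comp Complex.reCLM a b
  have him := hψ.absolutelyContinuousOnInterval_comp Complex.imCLM a b
  have hN : (fun x => ‖ψ x‖ ^ 2) = fun x =>
      Complex.reCLM (ψ x) * Complex.reCLM (ψ x) + Complex.imCLM (ψ x) * Complex.imCLM (ψ x) := by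
    funext x
    simp [Complex.sq_norm, Complex.normSq_apply]
  rw [hN]
  exact (hre.fun_mul hre).fun_add (him.fun_mul him)

lemma abs_norm_sq_sub_norm_sq_le (hψ : IsH1 ψ ψ') {a b : ℝ} (hab : a ≤ b) :
    |‖ψ b‖ ^ 2 - ‖ψ a‖ ^ 2| ≤ 2 * ∫ t in a..b, ‖ψ t‖ * ‖ψ' t‖ := by
  have hN := hψ.absolutelyContinuousOnInterval_norm_sq a b
  have hK := hψ.memLp_two.integrable_norm_mul_norm hψ.memLp_two_deriv
  have hderiv : ∀ᵐ t, |deriv (fun x => ‖ψ x‖ ^ 2) t| ≤ 2 * (‖ψ t‖ * ‖ψ' t‖) := by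
    filter_upwards [hψ.ae_hasDerivAt] with t ht
    rw [ht.norm_sq.deriv, abs_mul, abs_two]
    gcongr
    exact abs_real_inner_le_norm _ _
  calc |‖ψ b‖ ^ 2 - ‖ψ a‖ ^ 2| = |∫ t in a..b, deriv (fun x => ‖ψ x‖ ^ 2) t| := by
        rw [hN.integral_deriv_eq_sub]
    _ ≤ ∫ t in a..b, |deriv (fun x => ‖ψ x‖ ^ 2) t| :=
        intervalIntegral.abs_integral_le_integral_abs hab
    _ ≤ ∫ t in a..b, 2 * (‖ψ t‖ * ‖ψ' t‖) :=
        intervalIntegral.integral_mono_ae hab hN.intervalIntegrable_deriv.abs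
          (hK.intervalIntegrable.const_mul 2) hderiv
    _ = _ := intervalIntegral.integral_const_mul _ _

lemma norm_sq_le_integral_norm_mul_norm (hψ : IsH1 ψ ψ') (x : ℝ) :
    ‖ψ x‖ ^ 2 ≤ ∫ t, ‖ψ t‖ * ‖ψ' t‖ := by
  have hK := hψ.memLp_two.integrable_norm_mul_norm hψ.memLp_two_deriv
  have hψ2 : Integrable (fun t => ‖ψ t‖ ^ 2) := hψ.2.2.2.1
  refine le_of_forall_pos_le_add fun ε hε => ?_
  obtain ⟨a, ha, hψa⟩ := hψ2.exists_mem_norm_lt (Real.volume_Iic (a := x)) hε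
  obtain ⟨b, hb, hψb⟩ := hψ2.exists_mem_norm_lt (Real.volume_Ici (a := x)) hε
  simp only [norm_pow, norm_norm] at hψa hψb
  have hleft := (le_abs_self _).trans (hψ.abs_norm_sq_sub_norm_sq_le (mem_Iic.1 ha))
  have hright := (neg_le_abs _).trans (hψ.abs_norm_sq_sub_norm_sq_le (mem_Ici.1 hb))
  have hsplit : (∫ t in a..x, ‖ψ t‖ * ‖ψ' t‖) + (∫ t in x..b, ‖ψ t‖ * ‖ψ' t‖) =
      ∫ t in a..b, ‖ψ t‖ * ‖ψ' t‖ :=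
    intervalIntegral.integral_add_adjacent_intervals hK.intervalIntegrable hK.intervalIntegrable
  have hle : (∫ t in a..b, ‖ψ t‖ * ‖ψ' t‖) ≤ ∫ t, ‖ψ t‖ * ‖ψ' t‖ := by
    rw [intervalIntegral.integral_of_le ((mem_Iic.1 ha).trans (mem_Ici.1 hb))]
    exact setIntegral_le_integral hK (ae_of_all _ fun t => by positivity)
  linarith

lemma norm_pow_four_le (hψ : IsH1 ψ ψ') (x : ℝ) :
    ‖ψ x‖ ^ 4 ≤ (∫ t, ‖ψ t‖ ^ 2) * ∫ t, ‖ψ' t‖ ^ 2 :=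
  calc ‖ψ x‖ ^ 4 = (‖ψ x‖ ^ 2) ^ 2 := by ring
    _ ≤ (∫ t, ‖ψ t‖ * ‖ψ' t‖) ^ 2 := by
        gcongr
        exact hψ.norm_sq_le_integral_norm_mul_norm x
    _ ≤ _ := sq_integral_norm_mul_norm_le hψ.memLp_two hψ.memLp_two_deriv

end IsH1

/-- If `‖ψ‖²_{L²} < 2` then the energy `E(ψ) = (1/2)‖ψ'‖²_{L²} - (1/4)|ψ(0)|⁴` is
nonnegative and `‖ψ'‖²_{L²} ≤ 2E(ψ)/(1 - ‖ψ‖²_{L²}/2)`. -/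
theorem stmt4 (ψ ψ' : ℝ → ℂ) (hψ : IsH1 ψ ψ')
    (hmass : (∫ x : ℝ, ‖ψ x‖ ^ 2) < 2) :
    0 ≤ (1/2) * (∫ x : ℝ, ‖ψ' x‖ ^ 2) - (1/4) * ‖ψ 0‖ ^ 4 ∧
    (∫ x : ℝ, ‖ψ' x‖ ^ 2) ≤
      2 * ((1/2) * (∫ x : ℝ, ‖ψ' x‖ ^ 2) - (1/4) * ‖ψ 0‖ ^ 4) /
        (1 - (∫ x : ℝ, ‖ψ x‖ ^ 2) / 2) := by
  have hGN := hψ.norm_pow_four_le 0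
  have hM : 0 ≤ ∫ x : ℝ, ‖ψ x‖ ^ 2 := integral_nonneg fun x => by positivity
  have hD : 0 ≤ ∫ x : ℝ, ‖ψ' x‖ ^ 2 := integral_nonneg fun x => by positivity
  refine ⟨by nlinarith, ?_⟩
  rw [le_div_iff₀ (by linarith)]
  nlinarith
end

section
/- Virial identity: for a sufficiently regular finite-variance solution ψ of the point-nonlinearity NLS, d²/dt² ∫ x²|ψ(x,t)|² dx = 8‖ψ_x(t)‖²_{L²} - 4|ψ(0,t)|^{p+1} = 4(p+1)E(ψ) + (8 - 2(p+1))‖ψ_x(t)‖²_{L²}. In particular for p = 3 the right side equals 16E(ψ). -/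
/-!
Let `V(t) = ∫ x² |ψ|²` and `M(t) = ∫ x ψ̄ ψ_x`. Differentiating `V` under the integral and using
`ψ_t = i ψ_xx` off `0`, one integration by parts against `x²` (which kills the jump of `ψ_x`
at `0`) gives `V' = 4 Im M`. The time derivative of `ψ_x` is not available, so `M'` is obtained
from the difference quotient of `M`: an integration by parts moves the `x`-derivative off
`ψ_x(t') - ψ_x(t)`, leaving only `(ψ(t') - ψ(t)) / (t' - t)`, which the mean value theorem
dominates uniformly, and dominated convergence gives
`M' = ∫ x ψ̄_t ψ_x - ψ̄ ψ_t - x ψ̄_x ψ_t`. With `ψ_t = i ψ_xx` this is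
`Im M' = 2 ‖ψ_x‖² - |ψ(0)|^{p+1}`: the last term is the boundary term
`ψ̄(0) (ψ_x(0-) - ψ_x(0+))` of `∫ ψ̄ ψ_xx`, evaluated by the jump condition.
All integrals are controlled by an envelope `β` of the four fields with `(1 + x²) β²` integrable.
-/

open MeasureTheory Filter

structure PtNLS (p : ℝ) (ψ ψx ψxx ψt : ℝ → ℝ → ℂ) : Prop where
  hx : ∀ t : ℝ, ∀ x : ℝ, x ≠ 0 → HasDerivAt (fun y => ψ y t) (ψx x t) x
  hxx : ∀ t : ℝ, ∀ x : ℝ, x ≠ 0 → HasDerivAt (fun y => ψx y t) (ψxx x t) x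
  ht : ∀ t : ℝ, ∀ x : ℝ, x ≠ 0 → HasDerivAt (fun s => ψ x s) (ψt x t) t
  free : ∀ t : ℝ, ∀ x : ℝ, x ≠ 0 → Complex.I * ψt x t + ψxx x t = 0
  jump : ∀ t : ℝ, ∃ Dp Dm : ℂ,
    Tendsto (fun x => ψx x t) (nhdsWithin 0 (Set.Ioi 0)) (nhds Dp) ∧
    Tendsto (fun x => ψx x t) (nhdsWithin 0 (Set.Iio 0)) (nhds Dm) ∧
    Dp - Dm = -((‖ψ 0 t‖ ^ (p - 1) : ℝ) : ℂ) * ψ 0 t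

/-- Regularity with finite variance: fields jointly continuous off `x = 0`, `ψ, ψxx, ψt`
continuous across `0`, and dominated with weight `(1 + x²)` by an integrable function. -/
structure RegularVar (ψ ψx ψxx ψt : ℝ → ℝ → ℂ) : Prop where
  contψ : ∀ t : ℝ, Continuous fun y => ψ y t
  contψxx : ∀ t : ℝ, Filter.Tendsto (fun x => ψxx x t) (nhdsWithin 0 {(0:ℝ)}ᶜ) (nhds (ψxx 0 t))
  contψt : ∀ t : ℝ, Filter.Tendsto (fun x => ψt x t) (nhdsWithin 0 {(0:ℝ)}ᶜ) (nhds (ψt 0 t))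
  jointCont : ContinuousOn (fun q : ℝ × ℝ => (ψ q.1 q.2, ψx q.1 q.2, ψxx q.1 q.2, ψt q.1 q.2))
    {q : ℝ × ℝ | q.1 ≠ 0}
  decay : ∃ g : ℝ → ℝ, Integrable g ∧ ∀ t x : ℝ,
    (1 + x ^ 2) * (‖ψ x t‖ ^ 2 + ‖ψx x t‖ ^ 2 + ‖ψxx x t‖ ^ 2 + ‖ψt x t‖ ^ 2) ≤ g x

open Set
open scoped Topology ComplexConjugate

section PuncturedLine

variable {E : Type*} [NormedAddCommGroup E]

theorem aestronglyMeasurable_of_continuousOn_compl_singleton {f : ℝ → E} {c : ℝ}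
    (hf : ContinuousOn f {c}ᶜ) : AEStronglyMeasurable f volume := by
  simpa [restrict_compl_singleton] using
    hf.aestronglyMeasurable (μ := volume) (measurableSet_singleton c).compl

theorem integrable_of_continuousOn_compl_singleton {f : ℝ → E} {g : ℝ → ℝ} {c : ℝ}
    (hg : Integrable g) (hf : ContinuousOn f {c}ᶜ) (hfg : ∀ x, ‖f x‖ ≤ g x) : Integrable f :=
  hg.mono' (aestronglyMeasurable_of_continuousOn_compl_singleton hf) (.of_forall hfg)

variable [NormedSpace ℝ E] [CompleteSpace E] {f f' : ℝ → E} {c : ℝ} {a m : E}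

theorem integral_Ioi_of_hasDerivAt_of_tendsto_nhdsGT
    (hderiv : ∀ x ∈ Ioi c, HasDerivAt f (f' x) x) (hf' : IntegrableOn f' (Ioi c))
    (hc : Tendsto f (𝓝[>] c) (𝓝 a)) (htop : Tendsto f atTop (𝓝 m)) :
    ∫ x in Ioi c, f' x = m - a := by
  have hderiv' : ∀ x ∈ Ioi c, HasDerivAt (Function.update f c a) (f' x) x := fun x hx =>
    (hderiv x hx).congr_of_eventuallyEq <| by
      filter_upwards [eventually_ne_nhds hx.out.ne'] with y hy using Function.update_of_ne hy _ _
  have htop' : Tendsto (Function.update f c a) atTop (𝓝 m) := htop.congr' <| by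
    filter_upwards [eventually_ne_atTop c] with y hy using (Function.update_of_ne hy _ _).symm
  have hcont : ContinuousWithinAt (Function.update f c a) (Ici c) c := by
    rwa [continuousWithinAt_update_same, Ici_sdiff_left]
  simpa using integral_Ioi_of_hasDerivAt_of_tendsto hcont hderiv' hf' htop'

theorem integral_Iic_of_hasDerivAt_of_tendsto_nhdsLT
    (hderiv : ∀ x ∈ Iio c, HasDerivAt f (f' x) x) (hf' : IntegrableOn f' (Iic c))
    (hc : Tendsto f (𝓝[<] c) (𝓝 a)) (hbot : Tendsto f atBot (𝓝 m)) :
    ∫ x in Iic c, f' x = a - m := by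
  have hderiv' : ∀ x ∈ Iio c, HasDerivAt (Function.update f c a) (f' x) x := fun x hx =>
    (hderiv x hx).congr_of_eventuallyEq <| by
      filter_upwards [eventually_ne_nhds hx.out.ne] with y hy using Function.update_of_ne hy _ _
  have hbot' : Tendsto (Function.update f c a) atBot (𝓝 m) := hbot.congr' <| by
    filter_upwards [eventually_ne_atBot c] with y hy using (Function.update_of_ne hy _ _).symm
  have hcont : ContinuousWithinAt (Function.update f c a) (Iic c) c := by
    rwa [continuousWithinAt_update_same, Iic_sdiff_right]
  simpa using integral_Iic_of_hasDerivAt_of_tendsto hcont hderiv' hf' hbot'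

theorem integral_eq_sub_of_hasDerivAt_compl_singleton {b : E}
    (hderiv : ∀ x, x ≠ c → HasDerivAt f (f' x) x) (hf : Integrable f) (hf' : Integrable f')
    (hright : Tendsto f (𝓝[>] c) (𝓝 a)) (hleft : Tendsto f (𝓝[<] c) (𝓝 b)) :
    ∫ x, f' x = b - a := by
  have htop : Tendsto f atTop (𝓝 0) :=
    tendsto_zero_of_hasDerivAt_of_integrableOn_Ioi (fun x hx => hderiv x hx.out.ne')
      hf'.integrableOn hf.integrableOn
  have hbot : Tendsto f atBot (𝓝 0) :=
    tendsto_zero_of_hasDerivAt_of_integrableOn_Iic (a := c - 1)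
      (fun x hx => hderiv x (by linarith [hx.out] : x < c).ne) hf'.integrableOn hf.integrableOn
  rw [← setIntegral_univ, ← Iic_union_Ioi (a := c),
    setIntegral_union (Iic_disjoint_Ioi le_rfl) measurableSet_Ioi hf'.integrableOn
      hf'.integrableOn,
    integral_Iic_of_hasDerivAt_of_tendsto_nhdsLT (fun x hx => hderiv x hx.out.ne)
      hf'.integrableOn hleft hbot,
    integral_Ioi_of_hasDerivAt_of_tendsto_nhdsGT (fun x hx => hderiv x hx.out.ne')
      hf'.integrableOn hright htop]
  abel

end PuncturedLine

section Weights

theorem norm_ofReal_le_one_add_sq (x : ℝ) : ‖(x : ℂ)‖ ≤ 1 + x ^ 2 := by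
  rw [Complex.norm_real, Real.norm_eq_abs]
  nlinarith [sq_nonneg (|x| - 1), sq_abs x]

theorem norm_two_mul_ofReal_le_one_add_sq (x : ℝ) : ‖2 * (x : ℂ)‖ ≤ 1 + x ^ 2 := by
  rw [norm_mul, Complex.norm_real, Real.norm_eq_abs, Complex.norm_two]
  nlinarith [sq_nonneg (|x| - 1), sq_abs x]

theorem norm_ofReal_sq_le_one_add_sq (x : ℝ) : ‖(x : ℂ) ^ 2‖ ≤ 1 + x ^ 2 := by
  rw [norm_pow, Complex.norm_real, Real.norm_eq_abs, sq_abs]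
  linarith

theorem norm_one_le_one_add_sq (x : ℝ) : ‖(1 : ℂ)‖ ≤ 1 + x ^ 2 := by
  rw [norm_one]
  nlinarith [sq_nonneg x]

theorem norm_conj_mul_le {u v : ℂ} {a b : ℝ} (hu : ‖u‖ ≤ a) (hv : ‖v‖ ≤ b) :
    ‖conj u * v‖ ≤ a * b := by
  rw [norm_mul, Complex.norm_conj]
  exact mul_le_mul hu hv (norm_nonneg v) ((norm_nonneg u).trans hu)

theorem norm_mul_conj_mul_le {z u v : ℂ} {r a b : ℝ} (hz : ‖z‖ ≤ r) (hu : ‖u‖ ≤ a)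
    (hv : ‖v‖ ≤ b) : ‖z * (conj u * v)‖ ≤ r * (a * b) := by
  rw [norm_mul]
  exact mul_le_mul hz (norm_conj_mul_le hu hv) (norm_nonneg _) ((norm_nonneg z).trans hz)

theorem integrable_weight_mul_conj_mul {β : ℝ → ℝ}
    (hβ : Integrable fun x => (1 + x ^ 2) * β x ^ 2) {w u v : ℝ → ℂ} (hw : Continuous w)
    (hu : ContinuousOn u {0}ᶜ) (hv : ContinuousOn v {0}ᶜ) (hw_le : ∀ x, ‖w x‖ ≤ 1 + x ^ 2)
    (hu_le : ∀ x, ‖u x‖ ≤ β x) (hv_le : ∀ x, ‖v x‖ ≤ β x) :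
    Integrable fun x => w x * (conj (u x) * v x) :=
  integrable_of_continuousOn_compl_singleton hβ (by fun_prop) fun x =>
    (norm_mul_conj_mul_le (hw_le x) (hu_le x) (hv_le x)).trans_eq (by ring)

theorem tendsto_weight_mul_zero {l : Filter ℝ} (hl : l ≤ 𝓝 0) {w F : ℝ → ℂ} {L : ℂ}
    (hw : Continuous w) (hw0 : w 0 = 0) (hF : Tendsto F l (𝓝 L)) :
    Tendsto (fun x => w x * F x) l (𝓝 0) := by
  simpa [hw0] using ((hw.tendsto 0).mono_left hl).mul hF

theorem integrable_conj_mul {β : ℝ → ℝ} (hβ : Integrable fun x => (1 + x ^ 2) * β x ^ 2)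
    {u v : ℝ → ℂ} (hu : ContinuousOn u {0}ᶜ) (hv : ContinuousOn v {0}ᶜ)
    (hu_le : ∀ x, ‖u x‖ ≤ β x) (hv_le : ∀ x, ‖v x‖ ≤ β x) :
    Integrable fun x => conj (u x) * v x := by
  simpa using integrable_weight_mul_conj_mul hβ continuous_const hu hv norm_one_le_one_add_sq
    hu_le hv_le

end Weights

theorem hasDerivAt_ofReal (x : ℝ) : HasDerivAt (fun y : ℝ => (y : ℂ)) 1 x := by
  simpa using (hasDerivAt_id x).ofReal_comp

theorem HasDerivAt.conj_mul {u v : ℝ → ℂ} {u' v' : ℂ} {x : ℝ} (hu : HasDerivAt u u' x)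
    (hv : HasDerivAt v v' x) :
    HasDerivAt (fun y => conj (u y) * v y) (conj u' * v x + conj (u x) * v') x :=
  hu.star.mul hv

structure DominatedProfile (β : ℝ → ℝ) (u u' : ℝ → ℂ) : Prop where
  hasDerivAt : ∀ x, x ≠ 0 → HasDerivAt u (u' x) x
  continuousOn_deriv : ContinuousOn u' {0}ᶜ
  norm_le : ∀ x, ‖u x‖ ≤ β x
  norm_deriv_le : ∀ x, ‖u' x‖ ≤ β x
  exists_tendsto_nhdsGT : ∃ a, Tendsto u (𝓝[>] 0) (𝓝 a)
  exists_tendsto_nhdsLT : ∃ b, Tendsto u (𝓝[<] 0) (𝓝 b)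

namespace DominatedProfile

variable {β : ℝ → ℝ} {u u' u'' v v' : ℝ → ℂ}

theorem continuousOn (h : DominatedProfile β u u') : ContinuousOn u {0}ᶜ :=
  fun x hx => (h.hasDerivAt x hx).continuousAt.continuousWithinAt

theorem mono {β' : ℝ → ℝ} (h : DominatedProfile β u u') (hβ : ∀ x, β x ≤ β' x) :
    DominatedProfile β' u u' where
  hasDerivAt := h.hasDerivAt
  continuousOn_deriv := h.continuousOn_deriv
  norm_le x := (h.norm_le x).trans (hβ x)
  norm_deriv_le x := (h.norm_deriv_le x).trans (hβ x)
  exists_tendsto_nhdsGT := h.exists_tendsto_nhdsGT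
  exists_tendsto_nhdsLT := h.exists_tendsto_nhdsLT

theorem sub (hu : DominatedProfile β u u') (hv : DominatedProfile β v v') :
    DominatedProfile (fun x => 2 * β x) (fun x => u x - v x) (fun x => u' x - v' x) where
  hasDerivAt x hx := (hu.hasDerivAt x hx).sub (hv.hasDerivAt x hx)
  continuousOn_deriv := hu.continuousOn_deriv.sub hv.continuousOn_deriv
  norm_le x := (norm_sub_le _ _).trans (by linarith [hu.norm_le x, hv.norm_le x])
  norm_deriv_le x := (norm_sub_le _ _).trans (by linarith [hu.norm_deriv_le x, hv.norm_deriv_le x])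
  exists_tendsto_nhdsGT := by
    obtain ⟨a, ha⟩ := hu.exists_tendsto_nhdsGT
    obtain ⟨b, hb⟩ := hv.exists_tendsto_nhdsGT
    exact ⟨a - b, ha.sub hb⟩
  exists_tendsto_nhdsLT := by
    obtain ⟨a, ha⟩ := hu.exists_tendsto_nhdsLT
    obtain ⟨b, hb⟩ := hv.exists_tendsto_nhdsLT
    exact ⟨a - b, ha.sub hb⟩

theorem of_continuous (hd : ∀ x, x ≠ 0 → HasDerivAt u (u' x) x) (hc : Continuous u)
    (hc' : ContinuousOn u' {0}ᶜ) (hu : ∀ x, ‖u x‖ ≤ β x) (hu' : ∀ x, ‖u' x‖ ≤ β x) :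
    DominatedProfile β u u' where
  hasDerivAt := hd
  continuousOn_deriv := hc'
  norm_le := hu
  norm_deriv_le := hu'
  exists_tendsto_nhdsGT := ⟨u 0, (hc.tendsto 0).mono_left nhdsWithin_le_nhds⟩
  exists_tendsto_nhdsLT := ⟨u 0, (hc.tendsto 0).mono_left nhdsWithin_le_nhds⟩

theorem integral_deriv_weight_mul_conj_mul_eq_zero
    (hβ : Integrable fun x => (1 + x ^ 2) * β x ^ 2)
    (hv : DominatedProfile β v v') (hu : DominatedProfile β u u') {w w' : ℝ → ℂ}
    (hw : ∀ x, HasDerivAt w (w' x) x) (hw' : Continuous w') (hw0 : w 0 = 0)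
    (hw_le : ∀ x, ‖w x‖ ≤ 1 + x ^ 2) (hw'_le : ∀ x, ‖w' x‖ ≤ 1 + x ^ 2) :
    ∫ x, (w' x * (conj (v x) * u x) + w x * (conj (v' x) * u x + conj (v x) * u' x)) = 0 := by
  have hwc : Continuous w := continuous_iff_continuousAt.2 fun x => (hw x).continuousAt
  have hderiv : ∀ x, x ≠ 0 → HasDerivAt (fun y => w y * (conj (v y) * u y))
      (w' x * (conj (v x) * u x) + w x * (conj (v' x) * u x + conj (v x) * u' x)) x :=
    fun x hx => (hw x).mul ((hv.hasDerivAt x hx).conj_mul (hu.hasDerivAt x hx))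
  have hint := integrable_weight_mul_conj_mul hβ hwc hv.continuousOn hu.continuousOn hw_le
    hv.norm_le hu.norm_le
  have hint' : Integrable fun x =>
      w' x * (conj (v x) * u x) + w x * (conj (v' x) * u x + conj (v x) * u' x) := by
    simp only [mul_add]
    refine (integrable_weight_mul_conj_mul hβ hw' hv.continuousOn hu.continuousOn hw'_le
      hv.norm_le hu.norm_le).add ((integrable_weight_mul_conj_mul hβ hwc hv.continuousOn_deriv
      hu.continuousOn hw_le hv.norm_deriv_le hu.norm_le).add ?_)
    exact integrable_weight_mul_conj_mul hβ hwc hv.continuousOn hu.continuousOn_deriv hw_le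
      hv.norm_le hu.norm_deriv_le
  obtain ⟨a, ha⟩ := hv.exists_tendsto_nhdsGT
  obtain ⟨b, hb⟩ := hu.exists_tendsto_nhdsGT
  obtain ⟨a', ha'⟩ := hv.exists_tendsto_nhdsLT
  obtain ⟨b', hb'⟩ := hu.exists_tendsto_nhdsLT
  simpa using integral_eq_sub_of_hasDerivAt_compl_singleton hderiv hint hint'
    (tendsto_weight_mul_zero nhdsWithin_le_nhds hwc hw0 (ha.star.mul hb))
    (tendsto_weight_mul_zero nhdsWithin_le_nhds hwc hw0 (ha'.star.mul hb'))

theorem integral_ofReal_mul_conj_mul_deriv (hβ : Integrable fun x => (1 + x ^ 2) * β x ^ 2)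
    (hv : DominatedProfile β v v') (hu : DominatedProfile β u u') :
    ∫ x : ℝ, (x : ℂ) * (conj (v x) * u' x) =
      -(∫ x, conj (v x) * u x) - ∫ x : ℝ, (x : ℂ) * (conj (v' x) * u x) := by
  have h := integral_deriv_weight_mul_conj_mul_eq_zero hβ hv hu hasDerivAt_ofReal
    continuous_const (by simp) norm_ofReal_le_one_add_sq norm_one_le_one_add_sq
  have h₁ := integrable_conj_mul hβ hv.continuousOn hu.continuousOn hv.norm_le hu.norm_le
  have h₂ := integrable_weight_mul_conj_mul hβ Complex.continuous_ofReal hv.continuousOn_deriv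
    hu.continuousOn norm_ofReal_le_one_add_sq hv.norm_deriv_le hu.norm_le
  have h₃ := integrable_weight_mul_conj_mul hβ Complex.continuous_ofReal hv.continuousOn
    hu.continuousOn_deriv norm_ofReal_le_one_add_sq hv.norm_le hu.norm_deriv_le
  simp only [one_mul, mul_add] at h
  rw [integral_add h₁ (h₂.fun_add h₃), integral_add h₂ h₃] at h
  linear_combination h

theorem integral_ofReal_sq_mul_conj_mul_deriv2 (hβ : Integrable fun x => (1 + x ^ 2) * β x ^ 2)
    (hu : DominatedProfile β u u') (hu' : DominatedProfile β u' u'') :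
    ∫ x : ℝ, (x : ℂ) ^ 2 * (conj (u x) * u'' x) =
      -(2 * ∫ x : ℝ, (x : ℂ) * (conj (u x) * u' x))
        - ∫ x : ℝ, (x : ℂ) ^ 2 * (conj (u' x) * u' x) := by
  have h := integral_deriv_weight_mul_conj_mul_eq_zero hβ hu hu'
    (fun x => by simpa using (hasDerivAt_ofReal x).fun_pow 2) (by fun_prop) (by simp)
    norm_ofReal_sq_le_one_add_sq norm_two_mul_ofReal_le_one_add_sq
  have h₁ := integrable_weight_mul_conj_mul hβ Complex.continuous_ofReal hu.continuousOn
    hu'.continuousOn norm_ofReal_le_one_add_sq hu.norm_le hu'.norm_le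
  have h₂ := integrable_weight_mul_conj_mul hβ (by fun_prop) hu.continuousOn_deriv
    hu'.continuousOn norm_ofReal_sq_le_one_add_sq hu.norm_deriv_le hu'.norm_le
  have h₃ := integrable_weight_mul_conj_mul hβ (by fun_prop) hu.continuousOn
    hu'.continuousOn_deriv norm_ofReal_sq_le_one_add_sq hu.norm_le hu'.norm_deriv_le
  simp only [mul_add, mul_assoc (2 : ℂ)] at h
  rw [integral_add (h₁.const_mul 2) (h₂.fun_add h₃), integral_add h₂ h₃, integral_const_mul] at h
  linear_combination h

theorem integral_conj_mul_deriv2 (hβ : Integrable fun x => (1 + x ^ 2) * β x ^ 2)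
    (hu : DominatedProfile β u u') (hu' : DominatedProfile β u' u'') (hu0 : ContinuousAt u 0)
    {a b : ℂ} (ha : Tendsto u' (𝓝[>] 0) (𝓝 a)) (hb : Tendsto u' (𝓝[<] 0) (𝓝 b)) :
    ∫ x, conj (u x) * u'' x = conj (u 0) * (b - a) - ∫ x, conj (u' x) * u' x := by
  have h₁ := integrable_conj_mul hβ hu.continuousOn_deriv hu'.continuousOn hu.norm_deriv_le
    hu'.norm_le
  have h₂ := integrable_conj_mul hβ hu.continuousOn hu'.continuousOn_deriv hu.norm_le
    hu'.norm_deriv_le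
  have h := integral_eq_sub_of_hasDerivAt_compl_singleton
    (fun x hx => (hu.hasDerivAt x hx).conj_mul (hu'.hasDerivAt x hx))
    (integrable_conj_mul hβ hu.continuousOn hu'.continuousOn hu.norm_le hu'.norm_le) (h₁.add h₂)
    ((hu0.star.tendsto.mono_left nhdsWithin_le_nhds).mul ha)
    ((hu0.star.tendsto.mono_left nhdsWithin_le_nhds).mul hb)
  rw [integral_add h₁ h₂, Complex.star_def] at h
  linear_combination h

theorem integral_ofReal_mul_conj_mul_deriv_sub (hβ : Integrable fun x => (1 + x ^ 2) * β x ^ 2)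
    (hu : DominatedProfile β u u') (hv : DominatedProfile β v v') :
    (∫ x : ℝ, (x : ℂ) * (conj (u x) * u' x)) - ∫ x : ℝ, (x : ℂ) * (conj (v x) * v' x) =
      ∫ x : ℝ, ((x : ℂ) * (conj (u x - v x) * u' x) - conj (v x) * (u x - v x)
        - (x : ℂ) * (conj (v' x) * (u x - v x))) := by
  have hle : ∀ x, β x ≤ 2 * β x := fun x => by linarith [(norm_nonneg _).trans (hu.norm_le x)]
  have h2β : Integrable fun x => (1 + x ^ 2) * (2 * β x) ^ 2 :=
    (hβ.const_mul 4).congr (.of_forall fun x => by ring)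
  have hΔ := hu.sub hv
  have hv₂ := hv.mono hle
  have i₁ := integrable_weight_mul_conj_mul hβ Complex.continuous_ofReal hu.continuousOn
    hu.continuousOn_deriv norm_ofReal_le_one_add_sq hu.norm_le hu.norm_deriv_le
  have i₂ := integrable_weight_mul_conj_mul hβ Complex.continuous_ofReal hv.continuousOn
    hv.continuousOn_deriv norm_ofReal_le_one_add_sq hv.norm_le hv.norm_deriv_le
  have i₃ := integrable_weight_mul_conj_mul h2β Complex.continuous_ofReal hΔ.continuousOn
    hu.continuousOn_deriv norm_ofReal_le_one_add_sq hΔ.norm_le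
    fun x => (hu.norm_deriv_le x).trans (hle x)
  have i₄ := integrable_weight_mul_conj_mul h2β Complex.continuous_ofReal hv₂.continuousOn
    hΔ.continuousOn_deriv norm_ofReal_le_one_add_sq hv₂.norm_le hΔ.norm_deriv_le
  have i₅ := integrable_conj_mul h2β hv₂.continuousOn hΔ.continuousOn hv₂.norm_le hΔ.norm_le
  have i₆ := integrable_weight_mul_conj_mul h2β Complex.continuous_ofReal
    hv₂.continuousOn_deriv hΔ.continuousOn norm_ofReal_le_one_add_sq hv₂.norm_deriv_le hΔ.norm_le
  calc (∫ x : ℝ, (x : ℂ) * (conj (u x) * u' x)) - ∫ x : ℝ, (x : ℂ) * (conj (v x) * v' x)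
      = ∫ x : ℝ, ((x : ℂ) * (conj (u x - v x) * u' x)
          + (x : ℂ) * (conj (v x) * (u' x - v' x))) := by
        rw [← integral_sub i₁ i₂]
        exact integral_congr_ae (.of_forall fun x => by simp only [map_sub]; ring)
    _ = (∫ x : ℝ, (x : ℂ) * (conj (u x - v x) * u' x)) - (∫ x, conj (v x) * (u x - v x))
          - ∫ x : ℝ, (x : ℂ) * (conj (v' x) * (u x - v x)) := by
        rw [integral_add i₃ i₄, integral_ofReal_mul_conj_mul_deriv h2β hv₂ hΔ]
        ring
    _ = _ := by rw [integral_sub (f := fun x => _ - _) (i₃.sub i₅) i₆, integral_sub i₃ i₅]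

end DominatedProfile

theorem norm_slope_le_of_hasDerivAt {E : Type*} [NormedAddCommGroup E] [NormedSpace ℝ E]
    {f f' : ℝ → E} {C : ℝ} (hf : ∀ s, HasDerivAt f (f' s) s) (hC : ∀ s, ‖f' s‖ ≤ C)
    (t s : ℝ) : ‖slope f t s‖ ≤ C := by
  have hmvt := convex_univ.norm_image_sub_le_of_norm_hasDerivWithin_le
    (fun x _ => (hf x).hasDerivWithinAt) (fun x _ => hC x) (mem_univ t) (mem_univ s)
  rw [slope_def_module, norm_smul, norm_inv]
  rcases eq_or_ne s t with rfl | hst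
  · simpa using (norm_nonneg _).trans (hC s)
  · rwa [inv_mul_le_iff₀ (norm_pos_iff.2 (sub_ne_zero.2 hst)), mul_comm]

section TimeDependent

variable {β : ℝ → ℝ} {u ux ut : ℝ → ℝ → ℂ} {t : ℝ}

theorem hasDerivAt_integral_sq_mul_norm_sq (hβ : Integrable fun x => (1 + x ^ 2) * β x ^ 2)
    (hu : ∀ s, ContinuousOn (u · s) {0}ᶜ) (hut : ContinuousOn (ut · t) {0}ᶜ)
    (hderiv : ∀ x, x ≠ 0 → ∀ s, HasDerivAt (u x ·) (ut x s) s)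
    (hu_le : ∀ x s, ‖u x s‖ ≤ β x) (hut_le : ∀ x s, ‖ut x s‖ ≤ β x) :
    HasDerivAt (fun s => ∫ x, x ^ 2 * ‖u x s‖ ^ 2)
      (2 * (∫ x : ℝ, (x : ℂ) ^ 2 * (conj (u x t) * ut x t)).re) t := by
  have hF' : Integrable fun x : ℝ => (x : ℂ) ^ 2 * (conj (u x t) * ut x t) :=
    integrable_weight_mul_conj_mul hβ (by fun_prop) (hu t) hut norm_ofReal_sq_le_one_add_sq
      (hu_le · t) (hut_le · t)
  have hF : Integrable fun x => x ^ 2 * ‖u x t‖ ^ 2 := by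
    refine integrable_of_continuousOn_compl_singleton hβ (by fun_prop) fun x => ?_
    rw [Real.norm_of_nonneg (by positivity)]
    have := pow_le_pow_left₀ (norm_nonneg _) (hu_le x t) 2
    nlinarith [sq_nonneg (β x)]
  have key := hasDerivAt_integral_of_dominated_loc_of_deriv_le
    (F := fun s x => x ^ 2 * ‖u x s‖ ^ 2) (F' := fun s x =>
      2 * ((x : ℂ) ^ 2 * (conj (u x s) * ut x s)).re)
    (bound := fun x => 2 * ((1 + x ^ 2) * β x ^ 2))
    Filter.univ_mem (.of_forall fun s => aestronglyMeasurable_of_continuousOn_compl_singleton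
      (by fun_prop)) hF (by simpa using (hF'.re.const_mul 2).aestronglyMeasurable)
    (.of_forall fun x s _ => ?_) (hβ.const_mul 2) ?_
  · have hre : ∫ x : ℝ, ((x : ℂ) ^ 2 * (conj (u x t) * ut x t)).re =
        (∫ x : ℝ, (x : ℂ) ^ 2 * (conj (u x t) * ut x t)).re := integral_re hF'
    simpa only [integral_const_mul, hre] using key.2
  · rw [norm_mul, Real.norm_two]
    gcongr
    exact (RCLike.norm_re_le_norm _).trans ((norm_mul_conj_mul_le
      (norm_ofReal_sq_le_one_add_sq x) (hu_le x s) (hut_le x s)).trans_eq (by ring))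
  · filter_upwards [compl_mem_ae_iff.2 (measure_singleton (μ := volume) (0 : ℝ))] with x hx s _
    refine (((hderiv x hx s).norm_sq).const_mul (x ^ 2)).congr_deriv ?_
    rw [Complex.inner, ← Complex.ofReal_pow, Complex.re_ofReal_mul, mul_comm (ut x s)]
    ring

theorem slope_integral_ofReal_mul_conj_mul_deriv
    (hβ : Integrable fun x => (1 + x ^ 2) * β x ^ 2)
    (hu : ∀ s, DominatedProfile β (u · s) (ux · s)) (s : ℝ) :
    slope (fun s => ∫ x : ℝ, (x : ℂ) * (conj (u x s) * ux x s)) t s =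
      ∫ x : ℝ, ((x : ℂ) * (conj (slope (u x ·) t s) * ux x s)
        - conj (u x t) * slope (u x ·) t s - (x : ℂ) * (conj (ux x t) * slope (u x ·) t s)) := by
  rw [slope_def_module, (hu s).integral_ofReal_mul_conj_mul_deriv_sub hβ (hu t),
    ← integral_smul]
  congr 1 with x
  simp only [slope_def_module, Complex.real_smul, map_mul, map_sub, Complex.conj_ofReal]
  ring

theorem hasDerivAt_integral_ofReal_mul_conj_mul_deriv
    (hβ : Integrable fun x => (1 + x ^ 2) * β x ^ 2)
    (hu : ∀ s, DominatedProfile β (u · s) (ux · s))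
    (hderiv : ∀ x, x ≠ 0 → ∀ s, HasDerivAt (u x ·) (ut x s) s)
    (hut_le : ∀ x s, ‖ut x s‖ ≤ β x) (hux : ∀ x, x ≠ 0 → ContinuousAt (ux x ·) t) :
    HasDerivAt (fun s => ∫ x : ℝ, (x : ℂ) * (conj (u x s) * ux x s))
      (∫ x : ℝ, ((x : ℂ) * (conj (ut x t) * ux x t) - conj (u x t) * ut x t
        - (x : ℂ) * (conj (ux x t) * ut x t))) t := by
  rw [hasDerivAt_iff_tendsto_slope, funext (slope_integral_ofReal_mul_conj_mul_deriv hβ hu)]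
  have hae : ∀ᵐ x : ℝ, x ≠ 0 := compl_mem_ae_iff.2 (measure_singleton 0)
  refine tendsto_integral_filter_of_dominated_convergence (fun x => 3 * ((1 + x ^ 2) * β x ^ 2))
    (.of_forall fun s => aestronglyMeasurable_of_continuousOn_compl_singleton (c := 0) ?_)
    (.of_forall fun s => ?_) (hβ.const_mul 3) ?_
  · have := (hu s).continuousOn
    have := (hu t).continuousOn
    have := (hu s).continuousOn_deriv
    have := (hu t).continuousOn_deriv
    simp only [slope_def_module]
    fun_prop
  · filter_upwards [hae] with x hx
    have hq := norm_slope_le_of_hasDerivAt (hderiv x hx) (hut_le x) t s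
    have h₁ := norm_mul_conj_mul_le (norm_ofReal_le_one_add_sq x) hq ((hu s).norm_deriv_le x)
    have h₂ := norm_conj_mul_le ((hu t).norm_le x) hq
    have h₃ := norm_mul_conj_mul_le (norm_ofReal_le_one_add_sq x) ((hu t).norm_deriv_le x) hq
    have hβ₂ : β x * β x ≤ (1 + x ^ 2) * β x ^ 2 := by nlinarith [sq_nonneg x, sq_nonneg (β x)]
    refine (norm_sub_le _ _).trans ((add_le_add_left (norm_sub_le _ _) _).trans ?_)
    nlinarith
  · filter_upwards [hae] with x hx
    have hq := hasDerivAt_iff_tendsto_slope.1 (hderiv x hx t)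
    have hc := Complex.continuous_conj.tendsto
    exact ((tendsto_const_nhds.mul (((hc _).comp hq).mul
      ((hux x hx).tendsto.mono_left nhdsWithin_le_nhds))).sub
      (tendsto_const_nhds.mul hq)).sub (tendsto_const_nhds.mul (tendsto_const_nhds.mul hq))

end TimeDependent

theorem integral_conj_mul_self (f : ℝ → ℂ) :
    ∫ x, conj (f x) * f x = ((∫ x, ‖f x‖ ^ 2 : ℝ) : ℂ) := by
  simp_rw [Complex.conj_mul', ← integral_complex_ofReal, Complex.ofReal_pow]

theorem im_integral_ofReal_pow_mul_conj_mul_self (n : ℕ) (f : ℝ → ℂ) :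
    (∫ x : ℝ, (x : ℂ) ^ n * (conj (f x) * f x)).im = 0 := by
  simp_rw [Complex.conj_mul', ← Complex.ofReal_pow, ← Complex.ofReal_mul, integral_complex_ofReal,
    Complex.ofReal_im]

theorem conj_mul_rpow_norm_mul_self (z : ℂ) {p : ℝ} (hp : p + 1 ≠ 0) :
    conj z * (((‖z‖ ^ (p - 1) : ℝ) : ℂ) * z) = ((‖z‖ ^ (p + 1) : ℝ) : ℂ) := by
  rw [mul_left_comm, Complex.conj_mul', show p + 1 = (p - 1) + (2 : ℕ) by push_cast; ring,
    Real.rpow_add' (norm_nonneg z) (by push_cast; contrapose! hp; linarith), Real.rpow_natCast]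
  push_cast
  ring

namespace RegularVar

variable {ψ ψx ψxx ψt : ℝ → ℝ → ℂ}

theorem exists_envelope (hreg : RegularVar ψ ψx ψxx ψt) :
    ∃ β : ℝ → ℝ, Integrable (fun x => (1 + x ^ 2) * β x ^ 2) ∧ ∀ x t,
      ‖ψ x t‖ ≤ β x ∧ ‖ψx x t‖ ≤ β x ∧ ‖ψxx x t‖ ≤ β x ∧ ‖ψt x t‖ ≤ β x := by
  obtain ⟨g, hg, hle⟩ := hreg.decay
  have hw : ∀ x : ℝ, 0 < 1 + x ^ 2 := fun x => by positivity
  have hg0 : ∀ x, 0 ≤ g x := fun x => le_trans (by positivity) (hle 0 x)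
  have hmass : ∀ x, (1 + x ^ 2) * √(g x / (1 + x ^ 2)) ^ 2 = g x := fun x => by
    rw [Real.sq_sqrt (div_nonneg (hg0 x) (hw x).le), mul_div_cancel₀ _ (hw x).ne']
  have hsqrt : ∀ x (a : ℝ), 0 ≤ a → (1 + x ^ 2) * a ^ 2 ≤ g x → a ≤ √(g x / (1 + x ^ 2)) :=
    fun x a ha h => (Real.le_sqrt ha (div_nonneg (hg0 x) (hw x).le)).2 <| by
      rwa [le_div_iff₀ (hw x), mul_comm]
  refine ⟨fun x => √(g x / (1 + x ^ 2)), hg.congr (.of_forall fun x => (hmass x).symm),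
    fun x t => ⟨?_, ?_, ?_, ?_⟩⟩ <;> refine hsqrt x _ (norm_nonneg _) (le_trans ?_ (hle t x)) <;>
    gcongr <;> linarith [sq_nonneg ‖ψ x t‖, sq_nonneg ‖ψx x t‖, sq_nonneg ‖ψxx x t‖,
      sq_nonneg ‖ψt x t‖]

theorem continuousOn_space (hreg : RegularVar ψ ψx ψxx ψt) (t : ℝ) :
    ContinuousOn (fun x => (ψ x t, ψx x t, ψxx x t, ψt x t)) {0}ᶜ :=
  hreg.jointCont.comp (continuous_id.prodMk continuous_const).continuousOn fun _ hx => hx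

theorem continuousAt_time (hreg : RegularVar ψ ψx ψxx ψt) {x : ℝ} (hx : x ≠ 0)
    (t : ℝ) : ContinuousAt (fun s => (ψ x s, ψx x s, ψxx x s, ψt x s)) t :=
  ContinuousAt.comp (f := fun s => (x, s))
    (hreg.jointCont.continuousAt ((isOpen_ne_fun continuous_fst continuous_const).mem_nhds hx))
    (by fun_prop)

end RegularVar

namespace PtNLS

variable {p : ℝ} {ψ ψx ψxx ψt : ℝ → ℝ → ℂ} {β : ℝ → ℝ} {t : ℝ}

theorem time_deriv_eq (h : PtNLS p ψ ψx ψxx ψt) {x : ℝ} (hx : x ≠ 0) (t : ℝ) :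
    ψt x t = Complex.I * ψxx x t := by
  linear_combination (-Complex.I) * h.free t x hx + ψt x t * Complex.I_sq

theorem dominatedProfile (h : PtNLS p ψ ψx ψxx ψt) (hreg : RegularVar ψ ψx ψxx ψt)
    (hle : ∀ x t, ‖ψ x t‖ ≤ β x ∧ ‖ψx x t‖ ≤ β x ∧ ‖ψxx x t‖ ≤ β x ∧ ‖ψt x t‖ ≤ β x) (t : ℝ) :
    DominatedProfile β (ψ · t) (ψx · t) :=
  .of_continuous (h.hx t) (hreg.contψ t) (hreg.continuousOn_space t).snd.fst (hle · t |>.1)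
    (hle · t |>.2.1)

theorem dominatedProfile_deriv (h : PtNLS p ψ ψx ψxx ψt) (hreg : RegularVar ψ ψx ψxx ψt)
    (hle : ∀ x t, ‖ψ x t‖ ≤ β x ∧ ‖ψx x t‖ ≤ β x ∧ ‖ψxx x t‖ ≤ β x ∧ ‖ψt x t‖ ≤ β x) (t : ℝ) :
    DominatedProfile β (ψx · t) (ψxx · t) where
  hasDerivAt := h.hxx t
  continuousOn_deriv := (hreg.continuousOn_space t).snd.snd.fst
  norm_le x := (hle x t).2.1
  norm_deriv_le x := (hle x t).2.2.1
  exists_tendsto_nhdsGT := let ⟨Dp, _, hDp, _⟩ := h.jump t; ⟨Dp, hDp⟩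
  exists_tendsto_nhdsLT := let ⟨_, Dm, _, hDm, _⟩ := h.jump t; ⟨Dm, hDm⟩

theorem variance_deriv_eq_momentum (h : PtNLS p ψ ψx ψxx ψt)
    (hβ : Integrable fun x => (1 + x ^ 2) * β x ^ 2) (hψ : DominatedProfile β (ψ · t) (ψx · t))
    (hψx : DominatedProfile β (ψx · t) (ψxx · t)) :
    2 * (∫ x : ℝ, (x : ℂ) ^ 2 * (conj (ψ x t) * ψt x t)).re =
      4 * (∫ x : ℝ, (x : ℂ) * (conj (ψ x t) * ψx x t)).im := by
  have hI : ∫ x : ℝ, (x : ℂ) ^ 2 * (conj (ψ x t) * ψt x t) =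
      Complex.I * ∫ x : ℝ, (x : ℂ) ^ 2 * (conj (ψ x t) * ψxx x t) := by
    rw [← integral_const_mul]
    refine integral_congr_ae ?_
    filter_upwards [compl_mem_ae_iff.2 (measure_singleton 0)] with x hx
    rw [h.time_deriv_eq hx]
    ring
  rw [hI, Complex.I_mul_re, hψ.integral_ofReal_sq_mul_conj_mul_deriv2 hβ hψx, Complex.sub_im,
    im_integral_ofReal_pow_mul_conj_mul_self]
  simp only [Complex.neg_im, Complex.mul_im, Complex.re_ofNat, Complex.im_ofNat, zero_mul,
    add_zero, sub_zero, neg_neg]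
  ring

theorem im_momentum_deriv_eq (h : PtNLS p ψ ψx ψxx ψt) (hp : p + 1 ≠ 0)
    (hβ : Integrable fun x => (1 + x ^ 2) * β x ^ 2) (hψ : DominatedProfile β (ψ · t) (ψx · t))
    (hψx : DominatedProfile β (ψx · t) (ψxx · t)) (hψ0 : ContinuousAt (ψ · t) 0) :
    (∫ x : ℝ, ((x : ℂ) * (conj (ψt x t) * ψx x t) - conj (ψ x t) * ψt x t
        - (x : ℂ) * (conj (ψx x t) * ψt x t))).im =
      2 * (∫ x, ‖ψx x t‖ ^ 2) - ‖ψ 0 t‖ ^ (p + 1) := by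
  obtain ⟨Dp, Dm, hDp, hDm, hjump⟩ := h.jump t
  have hK : ∀ᵐ x : ℝ, ((x : ℂ) * (conj (ψt x t) * ψx x t) - conj (ψ x t) * ψt x t
      - (x : ℂ) * (conj (ψx x t) * ψt x t)) = -Complex.I * (((x : ℂ) * (conj (ψxx x t) * ψx x t)
        + (x : ℂ) * (conj (ψx x t) * ψxx x t)) + conj (ψ x t) * ψxx x t) := by
    filter_upwards [compl_mem_ae_iff.2 (measure_singleton 0)] with x hx
    rw [h.time_deriv_eq hx, map_mul, Complex.conj_I]
    ring
  have i₁ := integrable_weight_mul_conj_mul hβ Complex.continuous_ofReal hψx.continuousOn_deriv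
    hψx.continuousOn norm_ofReal_le_one_add_sq hψx.norm_deriv_le hψx.norm_le
  have i₂ := integrable_weight_mul_conj_mul hβ Complex.continuous_ofReal hψx.continuousOn
    hψx.continuousOn_deriv norm_ofReal_le_one_add_sq hψx.norm_le hψx.norm_deriv_le
  have i₃ := integrable_conj_mul hβ hψ.continuousOn hψx.continuousOn_deriv hψ.norm_le
    hψx.norm_deriv_le
  have hboundary : conj (ψ 0 t) * (Dm - Dp) = ((‖ψ 0 t‖ ^ (p + 1) : ℝ) : ℂ) := by
    rw [← conj_mul_rpow_norm_mul_self _ hp]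
    linear_combination (-conj (ψ 0 t)) * hjump
  rw [integral_congr_ae hK, integral_const_mul, integral_add (i₁.fun_add i₂) i₃, integral_add i₁ i₂,
    hψx.integral_ofReal_mul_conj_mul_deriv hβ hψx, hψ.integral_conj_mul_deriv2 hβ hψx hψ0 hDp hDm,
    hboundary, integral_conj_mul_self]
  simp only [neg_mul, Complex.neg_im, Complex.I_mul_im, Complex.add_re, Complex.sub_re,
    Complex.neg_re, Complex.ofReal_re]
  ring

end PtNLS

/-- Virial identity: `d²/dt² ∫ x²|ψ|² = 8‖ψ_x‖²_{L²} - 4|ψ(0,t)|^{p+1}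
= 4(p+1)E(ψ) + (8-2(p+1))‖ψ_x‖²_{L²}`; for `p = 3` this is `16E(ψ)`. -/
theorem stmt16 (p : ℝ) (hp : 1 < p) (ψ ψx ψxx ψt : ℝ → ℝ → ℂ)
    (h : PtNLS p ψ ψx ψxx ψt) (hreg : RegularVar ψ ψx ψxx ψt) :
    ∃ g : ℝ → ℝ,
      (∀ t : ℝ, HasDerivAt (fun s => ∫ x : ℝ, x ^ 2 * ‖ψ x s‖ ^ 2) (g t) t) ∧
      ∀ t : ℝ,
        HasDerivAt g (8 * (∫ x : ℝ, ‖ψx x t‖ ^ 2) - 4 * ‖ψ 0 t‖ ^ (p+1)) t ∧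
        8 * (∫ x : ℝ, ‖ψx x t‖ ^ 2) - 4 * ‖ψ 0 t‖ ^ (p+1) =
          4 * (p+1) * ((1/2) * (∫ x : ℝ, ‖ψx x t‖ ^ 2) - (1/(p+1)) * ‖ψ 0 t‖ ^ (p+1)) +
            (8 - 2 * (p+1)) * ∫ x : ℝ, ‖ψx x t‖ ^ 2 ∧
        (p = 3 →
          8 * (∫ x : ℝ, ‖ψx x t‖ ^ 2) - 4 * ‖ψ 0 t‖ ^ (p+1) =
            16 * ((1/2) * (∫ x : ℝ, ‖ψx x t‖ ^ 2) - (1/(p+1)) * ‖ψ 0 t‖ ^ (p+1))) := by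
  have hp1 : p + 1 ≠ 0 := by linarith
  obtain ⟨β, hβ, hle⟩ := hreg.exists_envelope
  have hψ := h.dominatedProfile hreg hle
  have hψx := h.dominatedProfile_deriv hreg hle
  refine ⟨fun t => 4 * (∫ x : ℝ, (x : ℂ) * (conj (ψ x t) * ψx x t)).im, fun t => ?_,
    fun t => ⟨?_, by field_simp; ring, fun hp3 => by subst hp3; norm_num; ring⟩⟩
  · dsimp only
    rw [← h.variance_deriv_eq_momentum hβ (hψ t) (hψx t)]
    exact hasDerivAt_integral_sq_mul_norm_sq hβ (fun s => (hψ s).continuousOn)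
      (hreg.continuousOn_space t).snd.snd.snd (fun x hx s => h.ht s x hx) (hle · · |>.1)
      (hle · · |>.2.2.2)
  · have hM := hasDerivAt_integral_ofReal_mul_conj_mul_deriv hβ hψ (fun x hx s => h.ht s x hx)
      (hle · · |>.2.2.2) fun x hx => (hreg.continuousAt_time hx t).snd.fst
    have := (Complex.imCLM.hasFDerivAt.comp_hasDerivAt t hM).const_mul 4
    rw [Function.comp_def] at this
    simp only [Complex.imCLM_apply,
      h.im_momentum_deriv_eq hp1 hβ (hψ t) (hψx t) (hreg.contψ t).continuousAt] at this
    exact this.congr_deriv (by ring)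
end

section
/- For every ε > 0 there exists δ > 0 such that: if v ∈ H¹(ℝ) satisfies | ‖v'‖_{L²} - ‖φ₀'‖_{L²} | ≤ δ, | ‖v‖_{L²} - ‖φ₀‖_{L²} | ≤ δ, and | |v(0)| - |φ₀(0)| | ≤ δ, then there exists θ ∈ ℝ with ‖v - e^{iθ}φ₀‖_{H¹} ≤ ε. -/
open MeasureTheory

open Set

/-! `φ₀ / (2√2)` is the Green's function of `1 - d²/dx²`, so every `v ∈ H¹` satisfies
`⟨v, φ₀⟩_{H¹} = 2√2 v(0)`. On each half-line this is an integration by parts against `e^{-|x|}`,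
proved by Fubini because `v` is only known to be the integral of `v'`. Taking `e^{iθ}` to be
the phase of `v(0)` therefore gives
`‖v - e^{iθ}φ₀‖²_{H¹} = ‖v‖² + ‖v'‖² + ‖φ₀‖²_{H¹} - 4√2 |v(0)|`, with `‖φ₀‖²_{H¹} = 4`,
and the right-hand side is `O(δ)` once `‖v‖`, `‖v'‖` and `|v(0)|` are `δ`-close to `√2`. -/

theorem Real.measurable_sign : Measurable Real.sign :=
  measurable_const.ite measurableSet_Iio
    (measurable_const.ite measurableSet_Ioi measurable_const)

noncomputable def groundState (x : ℝ) : ℝ := Real.sqrt 2 * Real.exp (-|x|)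

noncomputable def groundStateDeriv (x : ℝ) : ℝ := -Real.sign x * Real.sqrt 2 * Real.exp (-|x|)

theorem integral_eq_integral_Ioi_add_comp_neg {E : Type*} [NormedAddCommGroup E]
    [NormedSpace ℝ E] {f : ℝ → E} (hf : Integrable f) :
    ∫ x, f x = ∫ x in Ioi 0, (f x + f (-x)) := by
  rw [integral_add hf.integrableOn hf.comp_neg.integrableOn, integral_comp_neg_Ioi, neg_zero,
    add_comm, intervalIntegral.integral_Iic_add_Ioi hf.integrableOn hf.integrableOn]

theorem integral_exp_neg_two_mul_abs : ∫ x, Real.exp (-2 * |x|) = 1 := by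
  rw [integral_comp_abs (f := fun x => Real.exp (-2 * x)), integral_exp_mul_Ioi (by norm_num)]
  norm_num

theorem integrable_exp_neg_two_mul_abs : Integrable fun x : ℝ => Real.exp (-2 * |x|) :=
  .of_integral_ne_zero (by rw [integral_exp_neg_two_mul_abs]; exact one_ne_zero)

theorem groundState_sq (x : ℝ) : groundState x ^ 2 = 2 * Real.exp (-2 * |x|) := by
  rw [groundState, mul_pow, Real.sq_sqrt zero_le_two, ← Real.exp_nat_mul]
  ring_nf

theorem groundStateDeriv_sq_ae :
    (fun x => groundStateDeriv x ^ 2) =ᵐ[volume] fun x => groundState x ^ 2 := by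
  filter_upwards [Measure.ae_ne volume 0] with x hx
  rcases hx.lt_or_gt with h | h <;>
    simp [groundStateDeriv, groundState, Real.sign_of_neg, Real.sign_of_pos, h, mul_pow]

theorem integral_groundState_sq : ∫ x, groundState x ^ 2 = 2 := by
  simp_rw [groundState_sq, integral_const_mul, integral_exp_neg_two_mul_abs, mul_one]

theorem integral_groundStateDeriv_sq : ∫ x, groundStateDeriv x ^ 2 = 2 := by
  rw [integral_congr_ae groundStateDeriv_sq_ae, integral_groundState_sq]

theorem memLp_groundState : MemLp groundState 2 := by
  refine (memLp_two_iff_integrable_sq (by unfold groundState; fun_prop)).2 ?_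
  simp_rw [groundState_sq]
  exact integrable_exp_neg_two_mul_abs.const_mul 2

theorem memLp_groundStateDeriv : MemLp groundStateDeriv 2 := by
  refine (memLp_two_iff_integrable_sq ?_).2 ?_
  · unfold groundStateDeriv
    exact ((Real.measurable_sign.neg.mul_const _).mul (by fun_prop)).aestronglyMeasurable
  · exact memLp_groundState.integrable_sq.congr groundStateDeriv_sq_ae.symm

theorem memLp_exp_neg_Ioi (a : ℝ) :
    MemLp (fun x => Real.exp (-x)) 2 (volume.restrict (Ioi a)) := by
  refine (memLp_two_iff_integrable_sq (by fun_prop)).2 ?_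
  refine (exp_neg_integrableOn_Ioi a two_pos).congr_fun (fun x _ => ?_) measurableSet_Ioi
  rw [sq, ← Real.exp_add]
  ring_nf

theorem integrableOn_exp_neg_smul_of_memLp {E : Type*} [NormedAddCommGroup E] [NormedSpace ℝ E]
    {u : ℝ → E} {a : ℝ} (hu : MemLp u 2 (volume.restrict (Ioi a))) :
    IntegrableOn (fun x => Real.exp (-x) • u x) (Ioi a) :=
  memLp_one_iff_integrable.1 (hu.smul (memLp_exp_neg_Ioi a))

theorem integral_Ioi_indicator_Ici_exp_neg {t : ℝ} (ht : 0 < t) :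
    ∫ x in Ioi 0, (Ici t).indicator (fun x => Real.exp (-x)) x = Real.exp (-t) := by
  rw [setIntegral_indicator measurableSet_Ici, inter_eq_right.2 (Ici_subset_Ioi.2 ht),
    integral_Ici_eq_integral_Ioi, integral_exp_neg_Ioi]

theorem integral_Ioi_exp_neg_smul_intervalIntegral {E : Type*} [NormedAddCommGroup E]
    [NormedSpace ℝ E] [CompleteSpace E] {w : ℝ → E}
    (hw : IntegrableOn (fun t => Real.exp (-t) • w t) (Ioi 0)) :
    ∫ x in Ioi 0, Real.exp (-x) • ∫ t in 0..x, w t = ∫ t in Ioi 0, Real.exp (-t) • w t := by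
  set F : ℝ → ℝ → E := fun x t => Real.exp (-x) • (Iic x).indicator w t
  have hF : ∀ x t, F x t = (Ici t).indicator (fun x => Real.exp (-x)) x • w t := by
    intro x t
    by_cases h : t ≤ x <;> simp [F, indicator, h]
  have hwm : AEStronglyMeasurable w (volume.restrict (Ioi 0)) := by
    refine (Real.continuous_exp.aestronglyMeasurable.smul hw.aestronglyMeasurable).congr
      (ae_of_all _ fun t => ?_)
    simp [smul_smul, ← Real.exp_add]
  have hFm : AEStronglyMeasurable (Function.uncurry F)
      ((volume.restrict (Ioi 0)).prod (volume.restrict (Ioi 0))) :=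
    (Real.continuous_exp.comp continuous_fst.neg).aestronglyMeasurable.smul
      (hwm.comp_snd.indicator (measurableSet_le measurable_snd measurable_fst))
  have hFi : Integrable (Function.uncurry F)
      ((volume.restrict (Ioi 0)).prod (volume.restrict (Ioi 0))) := by
    refine (integrable_prod_iff' hFm).2 ⟨ae_of_all _ fun t => ?_, ?_⟩
    · simp only [Function.uncurry_apply_pair, hF]
      exact ((integrableOn_exp_neg_Ioi 0).indicator measurableSet_Ici).smul_const (w t)
    · refine hw.norm.congr ((ae_restrict_mem measurableSet_Ioi).mono fun t ht => ?_)
      simp only [Function.uncurry_apply_pair, hF, norm_smul, Real.norm_eq_abs,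
        abs_of_nonneg (indicator_nonneg (fun x _ => (Real.exp_pos (-x)).le) _)]
      rw [integral_mul_const, integral_Ioi_indicator_Ici_exp_neg ht, abs_of_pos (Real.exp_pos _)]
  calc ∫ x in Ioi 0, Real.exp (-x) • ∫ t in 0..x, w t
      = ∫ x in Ioi 0, ∫ t in Ioi 0, F x t := by
        refine setIntegral_congr_fun measurableSet_Ioi fun x hx => ?_
        rw [integral_smul, setIntegral_indicator measurableSet_Iic, Ioi_inter_Iic,
          intervalIntegral.integral_of_le (le_of_lt hx)]
    _ = ∫ t in Ioi 0, ∫ x in Ioi 0, F x t := integral_integral_swap hFi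
    _ = ∫ t in Ioi 0, Real.exp (-t) • w t := by
        refine setIntegral_congr_fun measurableSet_Ioi fun t ht => ?_
        simp only [hF]
        rw [integral_smul_const, integral_Ioi_indicator_Ici_exp_neg ht]

theorem integral_Ioi_exp_neg_smul_sub {E : Type*} [NormedAddCommGroup E] [NormedSpace ℝ E]
    [CompleteSpace E] {w w' : ℝ → E}
    (hw : IntegrableOn (fun x => Real.exp (-x) • w x) (Ioi 0))
    (hw' : IntegrableOn (fun x => Real.exp (-x) • w' x) (Ioi 0))
    (hFTC : ∀ x, 0 < x → w x = w 0 + ∫ t in 0..x, w' t) :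
    ∫ x in Ioi 0, Real.exp (-x) • (w x - w' x) = w 0 := by
  have key : (∫ x in Ioi 0, Real.exp (-x) • w x) - w 0 = ∫ x in Ioi 0, Real.exp (-x) • w' x :=
    calc (∫ x in Ioi 0, Real.exp (-x) • w x) - w 0
        = (∫ x in Ioi 0, Real.exp (-x) • w x) - ∫ x in Ioi 0, Real.exp (-x) • w 0 := by
          rw [integral_smul_const, integral_exp_neg_Ioi_zero, one_smul]
      _ = ∫ x in Ioi 0, (Real.exp (-x) • w x - Real.exp (-x) • w 0) :=
          (integral_sub hw ((integrableOn_exp_neg_Ioi 0).smul_const _)).symm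
      _ = ∫ x in Ioi 0, Real.exp (-x) • ∫ t in 0..x, w' t :=
          setIntegral_congr_fun measurableSet_Ioi fun x hx => by
            rw [hFTC x hx, smul_add, add_sub_cancel_left]
      _ = ∫ x in Ioi 0, Real.exp (-x) • w' x := integral_Ioi_exp_neg_smul_intervalIntegral hw'
  simp_rw [smul_sub]
  rw [integral_sub hw hw', ← key, sub_sub_cancel]

theorem Complex.norm_sub_mul_ofReal_sq {a c : ℂ} (hc : ‖c‖ = 1) (b : ℝ) :
    ‖a - c * b‖ ^ 2 = ‖a‖ ^ 2 + b ^ 2 - 2 * (starRingEnd ℂ c * (a * b)).re := by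
  rw [Complex.sq_norm, Complex.sq_norm, Complex.normSq_sub, Complex.normSq_mul,
    Complex.normSq_eq_norm_sq c, hc, Complex.normSq_ofReal, map_mul, Complex.conj_ofReal]
  ring_nf

theorem Complex.re_conj_exp_arg_mul_I_mul (z : ℂ) :
    (starRingEnd ℂ (Complex.exp (z.arg * Complex.I)) * z).re = ‖z‖ := by
  nth_rw 2 [← Complex.norm_mul_exp_arg_mul_I z]
  rw [mul_left_comm, Complex.conj_mul', Complex.norm_exp_ofReal_mul_I]
  simp

theorem MeasureTheory.MemLp.integrable_mul_ofReal {α : Type*} [MeasurableSpace α]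
    {μ : Measure α} {f : α → ℂ} {g : α → ℝ} (hf : MemLp f 2 μ) (hg : MemLp g 2 μ) :
    Integrable (fun x => f x * g x) μ :=
  hf.integrable_mul hg.ofReal

theorem integral_norm_sub_mul_ofReal_sq {α : Type*} [MeasurableSpace α] {μ : Measure α}
    {f : α → ℂ} {g : α → ℝ} (hf : MemLp f 2 μ) (hg : MemLp g 2 μ) {c : ℂ} (hc : ‖c‖ = 1) :
    ∫ x, ‖f x - c * g x‖ ^ 2 ∂μ
      = (∫ x, ‖f x‖ ^ 2 ∂μ) + (∫ x, g x ^ 2 ∂μ)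
        - 2 * (starRingEnd ℂ c * ∫ x, f x * g x ∂μ).re := by
  have hfg : Integrable (fun x => starRingEnd ℂ c * (f x * g x)) μ :=
    (hf.integrable_mul_ofReal hg).const_mul _
  have hsq : Integrable (fun x => ‖f x‖ ^ 2 + g x ^ 2) μ :=
    (hf.integrable_norm_pow two_ne_zero).add hg.integrable_sq
  have hre : Integrable (fun x => 2 * (starRingEnd ℂ c * (f x * g x)).re) μ :=
    hfg.re.const_mul 2
  simp_rw [Complex.norm_sub_mul_ofReal_sq hc]
  rw [integral_sub hsq hre,
    integral_add (hf.integrable_norm_pow two_ne_zero) hg.integrable_sq, integral_const_mul,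
    ← integral_const_mul (starRingEnd ℂ c)]
  exact congrArg (fun r => _ - 2 * r) (integral_re hfg)

namespace IsH1

variable {v v' : ℝ → ℂ}

theorem memLp (h : IsH1 v v') : MemLp v 2 :=
  (memLp_two_iff_integrable_sq_norm h.1.aestronglyMeasurable).2 h.2.2.2.1

theorem memLp_deriv (h : IsH1 v v') : MemLp v' 2 :=
  (memLp_two_iff_integrable_sq_norm h.2.1).2 h.2.2.2.2

theorem integral_mul_groundState_add (h : IsH1 v v') :
    (∫ x, v x * groundState x) + ∫ x, v' x * groundStateDeriv x = 2 * Real.sqrt 2 * v 0 := by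
  have hv := h.memLp
  have hv' := h.memLp_deriv
  have hvneg : MemLp (fun x => v (-x)) 2 :=
    hv.comp_measurePreserving (Measure.measurePreserving_neg volume)
  have hv'neg : MemLp (fun x => -v' (-x)) 2 :=
    (hv'.comp_measurePreserving (Measure.measurePreserving_neg volume)).neg
  have hFTC_neg : ∀ x, 0 < x → v (-x) = v (-0) + ∫ t in 0..x, -v' (-t) := by
    intro x _
    rw [h.2.2.1 (-x), intervalIntegral.integral_neg, intervalIntegral.integral_comp_neg, neg_zero,
      intervalIntegral.integral_symm]
  have hpos := integral_Ioi_exp_neg_smul_sub (integrableOn_exp_neg_smul_of_memLp (hv.restrict _))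
    (integrableOn_exp_neg_smul_of_memLp (hv'.restrict _)) fun x _ => h.2.2.1 x
  have hneg := integral_Ioi_exp_neg_smul_sub
    (integrableOn_exp_neg_smul_of_memLp (hvneg.restrict _))
    (integrableOn_exp_neg_smul_of_memLp (hv'neg.restrict _)) hFTC_neg
  have hvφ := hv.integrable_mul_ofReal memLp_groundState
  have hv'ψ := hv'.integrable_mul_ofReal memLp_groundStateDeriv
  rw [← integral_add hvφ hv'ψ,
    integral_eq_integral_Ioi_add_comp_neg (f := fun x => _ + _) (hvφ.add hv'ψ)]
  calc ∫ x in Ioi 0, (v x * groundState x + v' x * groundStateDeriv x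
        + (v (-x) * groundState (-x) + v' (-x) * groundStateDeriv (-x)))
      = ∫ x in Ioi 0, Real.sqrt 2 • (Real.exp (-x) • (v x - v' x)
          + Real.exp (-x) • (v (-x) - -v' (-x))) :=
        setIntegral_congr_fun measurableSet_Ioi fun x (hx : 0 < x) => by
          simp only [groundState, groundStateDeriv, abs_neg, abs_of_pos hx, Real.sign_of_pos hx,
            Real.sign_of_neg (neg_neg_of_pos hx), Complex.real_smul]
          push_cast
          ring
    _ = Real.sqrt 2 • (v 0 + v 0) := by
        rw [integral_smul, integral_add
          (integrableOn_exp_neg_smul_of_memLp (u := fun x => v x - v' x) ((hv.sub hv').restrict _))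
          (integrableOn_exp_neg_smul_of_memLp (u := fun x => v (-x) - -v' (-x))
            ((hvneg.sub hv'neg).restrict _)), hpos, hneg, neg_zero]
    _ = 2 * Real.sqrt 2 * v 0 := by
        rw [Complex.real_smul]
        ring

theorem integral_norm_sub_groundState_sq (h : IsH1 v v') {c : ℂ} (hc : ‖c‖ = 1) :
    (∫ x, ‖v x - c * groundState x‖ ^ 2) + ∫ x, ‖v' x - c * groundStateDeriv x‖ ^ 2
      = (∫ x, ‖v x‖ ^ 2) + (∫ x, ‖v' x‖ ^ 2) + 4
        - 4 * Real.sqrt 2 * (starRingEnd ℂ c * v 0).re := by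
  rw [integral_norm_sub_mul_ofReal_sq h.memLp memLp_groundState hc,
    integral_norm_sub_mul_ofReal_sq h.memLp_deriv memLp_groundStateDeriv hc,
    integral_groundState_sq, integral_groundStateDeriv_sq]
  have key := congrArg (fun z => (starRingEnd ℂ c * z).re) h.integral_mul_groundState_add
  simp only [mul_add, Complex.add_re, mul_left_comm _ (2 * (Real.sqrt 2 : ℂ))] at key
  rw [← Complex.ofReal_ofNat, ← Complex.ofReal_mul, Complex.re_ofReal_mul] at key
  linarith

end IsH1

theorem sq_add_sq_add_four_sub_le {a b z δ : ℝ} (ha : |a - Real.sqrt 2| ≤ δ)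
    (hb : |b - Real.sqrt 2| ≤ δ) (hz : |z - Real.sqrt 2| ≤ δ) (hδ : δ ≤ 1) :
    a ^ 2 + b ^ 2 + 4 - 4 * Real.sqrt 2 * z ≤ 14 * δ := by
  rw [abs_le] at ha hb hz
  have h2 : Real.sqrt 2 ^ 2 = 2 := Real.sq_sqrt zero_le_two
  have hlo : 1 < Real.sqrt 2 := by nlinarith [Real.sqrt_nonneg 2]
  have hhi : Real.sqrt 2 < 3 / 2 := by nlinarith [Real.sqrt_nonneg 2]
  nlinarith

/-- Stability of the ground state `φ₀(x) = √2 e^{-|x|}` (so `‖φ₀‖_{L²} = ‖φ₀'‖_{L²} = √2`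
and `φ₀(0) = √2`): if the `L²` norms of `v, v'` and `|v(0)|` are `δ`-close to those of
`φ₀`, then `v` is `ε`-close in `H¹` to `e^{iθ}φ₀` for some phase `θ`. -/
theorem stmt18 : ∀ ε : ℝ, 0 < ε → ∃ δ : ℝ, 0 < δ ∧
    ∀ v v' : ℝ → ℂ, IsH1 v v' →
      |Real.sqrt (∫ x : ℝ, ‖v' x‖ ^ 2) - Real.sqrt 2| ≤ δ →
      |Real.sqrt (∫ x : ℝ, ‖v x‖ ^ 2) - Real.sqrt 2| ≤ δ →
      |‖v 0‖ - Real.sqrt 2| ≤ δ →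
      ∃ θ : ℝ,
        Real.sqrt
          ((∫ x : ℝ, ‖v x - Complex.exp ((θ:ℂ) * Complex.I) *
              ((Real.sqrt 2 * Real.exp (-|x|) : ℝ) : ℂ)‖ ^ 2) +
           ∫ x : ℝ, ‖v' x - Complex.exp ((θ:ℂ) * Complex.I) *
              ((-(Real.sign x) * Real.sqrt 2 * Real.exp (-|x|) : ℝ) : ℂ)‖ ^ 2) ≤ ε := by
  intro ε hε
  refine ⟨min 1 (ε ^ 2 / 14), by positivity, fun v v' h hv' hv hv0 => ⟨(v 0).arg, ?_⟩⟩
  refine Real.sqrt_le_iff.2 ⟨hε.le, ?_⟩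
  refine (h.integral_norm_sub_groundState_sq (Complex.norm_exp_ofReal_mul_I _)).trans_le ?_
  rw [Complex.re_conj_exp_arg_mul_I_mul]
  have hA := Real.sq_sqrt (integral_nonneg (μ := volume) fun x => sq_nonneg ‖v x‖)
  have hB := Real.sq_sqrt (integral_nonneg (μ := volume) fun x => sq_nonneg ‖v' x‖)
  linarith [sq_add_sq_add_four_sub_le hv hv' hv0 (min_le_left _ _), min_le_right 1 (ε ^ 2 / 14)]
end
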